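/- arXiv:1001.2607 — 5 statements merged into one kernel-verified Lean document; each statement's English description precedes it below -/
import Mathlib

section
/- Suppose y is holomorphic near a point x₀ ∈ ℂ and satisfies y(x)⁵ + a·y(x) + x = 0 for all x near x₀, where a ∈ ℂ and 256 a⁵ + 3125 x₀⁴ ≠ 0. Then (256 a⁵ + 3125 x⁴) y⁗(x) + 31250 x³ y'''(x) + 73125 x² y''(x) + 31875 x y'(x) − 1155 y(x) = 0 holds in a neighborhood of x₀. -/
/-!
Implicit differentiation of `y⁵ + a y + x = 0` gives `y' = -1 / (5 y⁴ + a)`, so every derivative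
of `y` is a rational function of `y` alone, and after substituting `x = -(y⁵ + a y)` the
differential equation becomes an identity between rational functions of `y`. The hypothesis
`256 a⁵ + 3125 x₀⁴ ≠ 0` says that `x₀` is not a branch point, i.e. `5 y⁴ + a ≠ 0` near `x₀`.
-/

open Filter Topology

section Field

variable {𝕜 : Type*} [Field 𝕜]

/-- The `k`-th derivative (`k ≤ 4`) of a solution of `y⁵ + a y + x = 0`, as a function of the
value `Y` of the solution. -/
def quinticBranchDeriv (a : 𝕜) : ℕ → 𝕜 → 𝕜
  | 0, Y => Y
  | 1, Y => -(5 * Y ^ 4 + a)⁻¹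
  | 2, Y => -20 * Y ^ 3 / (5 * Y ^ 4 + a) ^ 3
  | 3, Y => (60 * a * Y ^ 2 - 900 * Y ^ 6) / (5 * Y ^ 4 + a) ^ 5
  | 4, Y => (-120 * a ^ 2 * Y + 10800 * a * Y ^ 5 - 63000 * Y ^ 9) / (5 * Y ^ 4 + a) ^ 7
  | _, _ => 0

theorem quintic_discriminant_eq_zero {a X Y : 𝕜} (hY : Y ^ 5 + a * Y + X = 0)
    (hD : 5 * Y ^ 4 + a = 0) : 256 * a ^ 5 + 3125 * X ^ 4 = 0 := by
  obtain rfl : a = -5 * Y ^ 4 := by linear_combination hD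
  obtain rfl : X = 4 * Y ^ 5 := by linear_combination hY
  ring

theorem quinticBranchDeriv_picardFuchs {a X Y : 𝕜} (hY : Y ^ 5 + a * Y + X = 0)
    (hD : 5 * Y ^ 4 + a ≠ 0) :
    (256 * a ^ 5 + 3125 * X ^ 4) * quinticBranchDeriv a 4 Y
      + 31250 * X ^ 3 * quinticBranchDeriv a 3 Y
      + 73125 * X ^ 2 * quinticBranchDeriv a 2 Y
      + 31875 * X * quinticBranchDeriv a 1 Y - 1155 * Y = 0 := by
  obtain rfl : X = -Y ^ 5 - a * Y := by linear_combination hY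
  simp only [quinticBranchDeriv]
  rw [sub_eq_zero]
  field_simp
  rw [div_eq_iff (pow_ne_zero 7 (by rwa [mul_comm]))]
  ring

end Field

section Deriv

variable {𝕜 : Type*} [NontriviallyNormedField 𝕜]

theorem hasDerivAt_quinticBranchDeriv {a Y : 𝕜} (hD : 5 * Y ^ 4 + a ≠ 0) {k : ℕ} (hk : k < 4) :
    HasDerivAt (quinticBranchDeriv a k)
      (-(5 * Y ^ 4 + a) * quinticBranchDeriv a (k + 1) Y) Y := by
  have hDer : HasDerivAt (fun Y : 𝕜 => 5 * Y ^ 4 + a) (5 * (4 * Y ^ 3)) Y := by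
    simpa using ((hasDerivAt_pow 4 Y).const_mul 5).add_const a
  interval_cases k
  · exact (hasDerivAt_id' Y).congr_deriv (by simp only [quinticBranchDeriv]; field_simp)
  · exact (hDer.inv hD).neg.congr_deriv (by simp only [quinticBranchDeriv]; field_simp; ring)
  · have := ((hasDerivAt_pow 3 Y).const_mul (-20 : 𝕜)).div (hDer.pow 3) (pow_ne_zero 3 hD)
    exact this.congr_deriv (by simp only [quinticBranchDeriv, Pi.pow_apply]; field_simp; ring)
  · have := (((hasDerivAt_pow 2 Y).const_mul (60 * a)).sub
      ((hasDerivAt_pow 6 Y).const_mul (900 : 𝕜))).div (hDer.pow 5) (pow_ne_zero 5 hD)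
    exact this.congr_deriv
      (by simp only [quinticBranchDeriv, Pi.pow_apply, Pi.sub_apply]; field_simp; ring)

theorem hasDerivAt_of_quintic {a x : 𝕜} {y : 𝕜 → 𝕜} (hy : ContinuousAt y x)
    (hD : 5 * y x ^ 4 + a ≠ 0) (halg : ∀ᶠ z in 𝓝 x, y z ^ 5 + a * y z + z = 0) :
    HasDerivAt y (quinticBranchDeriv a 1 (y x)) x := by
  have hf : HasDerivAt (fun Y : 𝕜 => -(Y ^ 5 + a * Y)) (-(5 * y x ^ 4 + a)) (y x) := by
    exact ((hasDerivAt_pow 5 (y x)).add ((hasDerivAt_id' (y x)).const_mul a)).neg.congr_deriv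
      (by norm_num)
  exact (hf.of_local_left_inverse hy (neg_ne_zero.2 hD)
    (halg.mono fun z hz => by linear_combination -hz)).congr_deriv inv_neg

theorem iteratedDeriv_succ_eventuallyEq_of_autonomous {y g F F' : 𝕜 → 𝕜} {s : Set 𝕜} {x₀ : 𝕜}
    {n : ℕ} (hy : ∀ᶠ x in 𝓝 x₀, HasDerivAt y (g (y x)) x ∧ y x ∈ s)
    (hF : ∀ Y ∈ s, HasDerivAt F (F' Y) Y) (hn : iteratedDeriv n y =ᶠ[𝓝 x₀] F ∘ y) :
    iteratedDeriv (n + 1) y =ᶠ[𝓝 x₀] fun x => F' (y x) * g (y x) := by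
  rw [iteratedDeriv_succ]
  filter_upwards [hn.deriv, hy] with x hx ⟨hyx, hs⟩
  rw [hx]
  exact ((hF _ hs).comp x hyx).deriv

theorem iteratedDeriv_eventuallyEq_quinticBranchDeriv {a x₀ : 𝕜} {y : 𝕜 → 𝕜}
    (hy : ∀ᶠ x in 𝓝 x₀, HasDerivAt y (quinticBranchDeriv a 1 (y x)) x ∧ 5 * y x ^ 4 + a ≠ 0) :
    ∀ k ≤ 4, iteratedDeriv k y =ᶠ[𝓝 x₀] quinticBranchDeriv a k ∘ y
  | 0, _ => EventuallyEq.of_eq (iteratedDeriv_zero)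
  | k + 1, hk => by
    have := iteratedDeriv_succ_eventuallyEq_of_autonomous (s := {Y | 5 * Y ^ 4 + a ≠ 0}) hy
      (fun Y hY => hasDerivAt_quinticBranchDeriv hY (by omega))
      (iteratedDeriv_eventuallyEq_quinticBranchDeriv hy k (by omega))
    refine this.trans ?_
    filter_upwards [hy] with x ⟨_, hD⟩
    rw [Function.comp_apply, show quinticBranchDeriv a 1 (y x) = -(5 * y x ^ 4 + a)⁻¹ from rfl]
    field_simp

end Deriv

theorem stmt5 (a x₀ : ℂ) (hx₀ : 256 * a ^ 5 + 3125 * x₀ ^ 4 ≠ 0)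
    (y : ℂ → ℂ) (hy : AnalyticAt ℂ y x₀)
    (halg : ∀ᶠ x in nhds x₀, (y x) ^ 5 + a * y x + x = 0) :
    ∀ᶠ x in nhds x₀,
      (256 * a ^ 5 + 3125 * x ^ 4) * iteratedDeriv 4 y x
        + 31250 * x ^ 3 * iteratedDeriv 3 y x
        + 73125 * x ^ 2 * iteratedDeriv 2 y x
        + 31875 * x * deriv y x - 1155 * y x = 0 := by
  have hD : ∀ᶠ x in 𝓝 x₀, 5 * y x ^ 4 + a ≠ 0 := by
    have hy₀ := hy.continuousAt
    exact (by fun_prop : ContinuousAt (fun x => 5 * y x ^ 4 + a) x₀).eventually_ne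
      fun h => hx₀ (quintic_discriminant_eq_zero halg.self_of_nhds h)
  have hderiv : ∀ᶠ x in 𝓝 x₀,
      HasDerivAt y (quinticBranchDeriv a 1 (y x)) x ∧ 5 * y x ^ 4 + a ≠ 0 := by
    filter_upwards [hy.eventually_analyticAt, halg.eventually_nhds, hD] with x hyx halgx hDx
    exact ⟨hasDerivAt_of_quintic hyx.continuousAt hDx halgx, hDx⟩
  have h := iteratedDeriv_eventuallyEq_quinticBranchDeriv hderiv
  filter_upwards [h 1 (by norm_num), h 2 (by norm_num), h 3 (by norm_num), h 4 le_rfl, halg, hD]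
    with x h1 h2 h3 h4 halgx hDx
  rw [← iteratedDeriv_one, h1, h2, h3, h4]
  exact quinticBranchDeriv_picardFuchs halgx hDx
end

section
/- Suppose y is holomorphic near x₀ ∈ ℂ and satisfies y(x)⁵ + a·y(x)⁴ + x = 0 for all x near x₀, with a ∈ ℂ, x₀ ≠ 0, and 256 a⁵ + 3125 x₀ ≠ 0. Then ((256/5) a⁵ x³ + 625 x⁴) y⁽⁵⁾ + (384 a⁵ x² + 6875 x³) y⁽⁴⁾ + (624 a⁵ x + 19500 x²) y⁽³⁾ + (168 a⁵ + 14100 x) y⁽²⁾ + 1344 y' = 0 in a neighborhood of x₀. -/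
/-!
Solving the equation for `x` gives `x = φ(y)` with `φ = -(Y⁵ + a Y⁴)`, so `y` is a local inverse
of a polynomial. Differentiating `φ(y(x)) = x` gives `y' = 1 / φ'(y)`, and inductively
`y⁽ⁿ⁾ = Pₙ₋₁(y) / φ'(y)^(2n-1)` for explicit polynomials `Pₖ`. After substituting `x = φ(y)`
the differential equation becomes an identity between rational functions of `y`, which is
checked by clearing denominators.
-/

open Polynomial Filter Topology

namespace Polynomial

section Field

variable {K : Type*} [Field K]

/-- `Pₖ` in `y⁽ᵏ⁺¹⁾ = Pₖ(y) / φ'(y)^(2k+1)` for a local inverse `y` of `φ`: differentiating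
that quotient and using `y' = 1 / φ'(y)` gives the recursion. -/
noncomputable def inverseDerivNumerator (φ : K[X]) : ℕ → K[X]
  | 0 => 1
  | k + 1 => derivative (inverseDerivNumerator φ k) * derivative φ
      - (2 * k + 1 : K[X]) * inverseDerivNumerator φ k * derivative (derivative φ)

noncomputable def inverseIteratedDeriv (φ : K[X]) : ℕ → K → K
  | 0, Y => Y
  | k + 1, Y => (inverseDerivNumerator φ k).eval Y / (derivative φ).eval Y ^ (2 * k + 1)

end Field

variable {𝕜 : Type*} [NontriviallyNormedField 𝕜]

theorem hasDerivAt_eval_comp (p : 𝕜[X]) {y : 𝕜 → 𝕜} {y' x : 𝕜} (hy : HasDerivAt y y' x) :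
    HasDerivAt (fun x => p.eval (y x)) ((derivative p).eval (y x) * y') x :=
  (p.hasDerivAt (y x)).comp x hy

variable {φ : 𝕜[X]} {y : 𝕜 → 𝕜} {x₀ : 𝕜}

theorem eventually_eval_derivative_mul_deriv_eq_one
    (hy : ∀ᶠ x in 𝓝 x₀, DifferentiableAt 𝕜 y x) (hφ : ∀ᶠ x in 𝓝 x₀, φ.eval (y x) = x) :
    ∀ᶠ x in 𝓝 x₀, (derivative φ).eval (y x) * deriv y x = 1 := by
  have hφ' : (fun x => φ.eval (y x)) =ᶠ[𝓝 x₀] id := hφ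
  filter_upwards [hφ'.deriv, hy] with x hx hyx
  rwa [(hasDerivAt_eval_comp φ hyx.hasDerivAt).deriv, deriv_id] at hx

theorem iteratedDeriv_eventuallyEq_inverseIteratedDeriv
    (hy : ∀ᶠ x in 𝓝 x₀, DifferentiableAt 𝕜 y x) (hφ : ∀ᶠ x in 𝓝 x₀, φ.eval (y x) = x) :
    ∀ n, iteratedDeriv n y =ᶠ[𝓝 x₀] fun x => inverseIteratedDeriv φ n (y x)
  | 0 => by simp [inverseIteratedDeriv]
  | 1 => by
    filter_upwards [eventually_eval_derivative_mul_deriv_eq_one hy hφ] with x hx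
    simp [inverseIteratedDeriv, inverseDerivNumerator, eq_inv_of_mul_eq_one_right hx]
  | k + 2 => by
    rw [iteratedDeriv_succ]
    filter_upwards [(iteratedDeriv_eventuallyEq_inverseIteratedDeriv hy hφ (k + 1)).deriv,
      eventually_eval_derivative_mul_deriv_eq_one hy hφ, hy] with x hx hinv hyx
    have hne : (derivative φ).eval (y x) ≠ 0 := left_ne_zero_of_mul_eq_one hinv
    have hP := hasDerivAt_eval_comp (inverseDerivNumerator φ k) hyx.hasDerivAt
    have hQ := (hasDerivAt_eval_comp (derivative φ) hyx.hasDerivAt).fun_pow (2 * k + 1)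
    have hR : HasDerivAt (fun x => inverseIteratedDeriv φ (k + 1) (y x)) _ x :=
      hP.fun_div hQ (pow_ne_zero _ hne)
    rw [hx, hR.deriv, eq_inv_of_mul_eq_one_right hinv]
    simp only [inverseIteratedDeriv, inverseDerivNumerator, eval_sub, eval_mul, eval_add, eval_one,
      eval_ofNat, eval_natCast]
    field_simp
    push_cast
    ring

end Polynomial

open Polynomial

/-- The relation `y⁵ + a y⁴ + x = 0` solved for `x`. -/
noncomputable abbrev quinticInverse {K : Type*} [Field K] (a : K) : K[X] := -(X ^ 5 + C a * X ^ 4)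

theorem quinticInverse_ode {K : Type*} [Field K] [CharZero K] (a Y x : K)
    (hx : (quinticInverse a).eval Y = x) :
    ((256 / 5 : K) * a ^ 5 * x ^ 3 + 625 * x ^ 4) * inverseIteratedDeriv (quinticInverse a) 5 Y
        + (384 * a ^ 5 * x ^ 2 + 6875 * x ^ 3) * inverseIteratedDeriv (quinticInverse a) 4 Y
        + (624 * a ^ 5 * x + 19500 * x ^ 2) * inverseIteratedDeriv (quinticInverse a) 3 Y
        + (168 * a ^ 5 + 14100 * x) * inverseIteratedDeriv (quinticInverse a) 2 Y
        + 1344 * inverseIteratedDeriv (quinticInverse a) 1 Y = 0 := by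
  subst hx
  simp only [inverseIteratedDeriv]
  -- Where `φ'(Y) = 0`, every term is a division by zero.
  by_cases hY : (derivative (quinticInverse a)).eval Y = 0
  · simp only [hY]
    simp
  simp only [inverseDerivNumerator, neg_add_rev, derivative_neg, derivative_mul,
    derivative_C, zero_mul, derivative_X_pow_succ, Nat.cast_ofNat, map_add, map_one, zero_add,
    eval_add, eval_neg, eval_mul, eval_C, eval_one, eval_pow, eval_X, derivative_one,
    CharP.cast_eq_zero, mul_zero, mul_one, add_zero, one_mul, zero_sub, neg_neg, Nat.cast_one,
    pow_one, derivative_sub, derivative_X, derivative_ofNat, eval_sub, eval_ofNat, Nat.reduceMul,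
    Nat.reduceAdd, one_div] at hY ⊢
  field_simp
  ring

theorem stmt6_general (a x₀ : ℂ)
    (y : ℂ → ℂ) (hy : AnalyticAt ℂ y x₀)
    (halg : ∀ᶠ x in nhds x₀, (y x) ^ 5 + a * (y x) ^ 4 + x = 0) :
    ∀ᶠ x in nhds x₀,
      ((256 / 5 : ℂ) * a ^ 5 * x ^ 3 + 625 * x ^ 4) * iteratedDeriv 5 y x
        + (384 * a ^ 5 * x ^ 2 + 6875 * x ^ 3) * iteratedDeriv 4 y x
        + (624 * a ^ 5 * x + 19500 * x ^ 2) * iteratedDeriv 3 y x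
        + (168 * a ^ 5 + 14100 * x) * iteratedDeriv 2 y x
        + 1344 * deriv y x = 0 := by
  have hdiff : ∀ᶠ x in 𝓝 x₀, DifferentiableAt ℂ y x :=
    hy.eventually_analyticAt.mono fun x hx => hx.differentiableAt
  have hφ : ∀ᶠ x in 𝓝 x₀, (quinticInverse a).eval (y x) = x := by
    filter_upwards [halg] with x hx
    simp only [eval_neg, eval_add, eval_mul, eval_pow, eval_X, eval_C]
    linear_combination -hx
  have hD := iteratedDeriv_eventuallyEq_inverseIteratedDeriv hdiff hφ
  filter_upwards [hφ, hD 1, hD 2, hD 3, hD 4, hD 5] with x hx h1 h2 h3 h4 h5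
  rw [← iteratedDeriv_one, h1, h2, h3, h4, h5]
  exact quinticInverse_ode a (y x) x hx

theorem stmt6 (a x₀ : ℂ) (hx₀ : x₀ ≠ 0) (hd : 256 * a ^ 5 + 3125 * x₀ ≠ 0)
    (y : ℂ → ℂ) (hy : AnalyticAt ℂ y x₀)
    (halg : ∀ᶠ x in nhds x₀, (y x) ^ 5 + a * (y x) ^ 4 + x = 0) :
    ∀ᶠ x in nhds x₀,
      ((256 / 5 : ℂ) * a ^ 5 * x ^ 3 + 625 * x ^ 4) * iteratedDeriv 5 y x
        + (384 * a ^ 5 * x ^ 2 + 6875 * x ^ 3) * iteratedDeriv 4 y x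
        + (624 * a ^ 5 * x + 19500 * x ^ 2) * iteratedDeriv 3 y x
        + (168 * a ^ 5 + 14100 * x) * iteratedDeriv 2 y x
        + 1344 * deriv y x = 0 :=
  stmt6_general a x₀ y hy halg
end

section
/- Let y be holomorphic in the variables (x₀, x₁, …, x_n) near a point where it satisfies the generic algebraic equation x_n y^n + x_{n−1} y^{n−1} + ⋯ + x₁ y + x₀ = 0 with nonvanishing discriminant. Then y satisfies the Euler equations ∑_{i=0}^n i·x_i·(∂y/∂x_i) = −y and ∑_{i=0}^n x_i·(∂y/∂x_i) = 0. -/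
/-!
Differentiating `∑ i, x i * y(x) ^ i = 0` in the direction `v` gives
`D · ∂_v y = -∑ i, v i * y ^ i`, where `D = ∑ i, i * x i * y ^ (i - 1)` is the `y`-derivative
of the polynomial. Taking `v = x` yields `-∑ i, x i * y ^ i = 0`; taking `v i = i * x i` yields `-y · D`,
since `∑ i, i * x i * y ^ i = y · D`. Dividing by `D ≠ 0` gives the two Euler equations.
-/

open Finset Topology

section Algebra

variable {R : Type*} {n : ℕ}

def genericPoly [Semiring R] (a : Fin (n + 1) → R) (t : R) : R :=
  ∑ i : Fin (n + 1), a i * t ^ (i : ℕ)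

def genericPolyDeriv [Semiring R] (a : Fin (n + 1) → R) (t : R) : R :=
  ∑ i : Fin (n + 1), (i : ℕ) * a i * t ^ ((i : ℕ) - 1)

theorem mul_genericPolyDeriv [CommSemiring R] (a : Fin (n + 1) → R) (t : R) :
    t * genericPolyDeriv a t = genericPoly (fun i => (i : ℕ) * a i) t := by
  rw [genericPolyDeriv, genericPoly, mul_sum]
  refine sum_congr rfl fun i _ => ?_
  rcases Nat.eq_zero_or_pos (i : ℕ) with h | h
  · simp [h]
  · rw [← Nat.succ_pred_eq_of_pos h, pow_succ, Nat.succ_sub_one]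
    ring

theorem sum_mul_map_single {ι F : Type*} [Fintype ι] [DecidableEq ι] [CommSemiring R]
    [FunLike F (ι → R) R] [LinearMapClass F R (ι → R) R] (L : F) (c : ι → R) :
    ∑ i, c i * L (Pi.single i 1) = L c := by
  conv_rhs => rw [← univ_sum_single c, map_sum]
  refine sum_congr rfl fun i _ => ?_
  rw [← smul_eq_mul, ← map_smul, ← Pi.single_smul', smul_eq_mul, mul_one]

end Algebra

section Calculus

variable {𝕜 : Type*} [NontriviallyNormedField 𝕜] {n : ℕ}

def genericPolyCLM (t : 𝕜) : (Fin (n + 1) → 𝕜) →L[𝕜] 𝕜 :=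
  ∑ i : Fin (n + 1), t ^ (i : ℕ) • ContinuousLinearMap.proj i

theorem genericPolyCLM_apply (t : 𝕜) (a : Fin (n + 1) → 𝕜) :
    genericPolyCLM t a = genericPoly a t := by
  simp [genericPolyCLM, genericPoly, mul_comm]

theorem HasFDerivAt.genericPoly_self {y : (Fin (n + 1) → 𝕜) → 𝕜}
    {L : (Fin (n + 1) → 𝕜) →L[𝕜] 𝕜} {x : Fin (n + 1) → 𝕜} (hy : HasFDerivAt y L x) :
    HasFDerivAt (fun z => genericPoly z (y z))
      (genericPolyCLM (y x) + genericPolyDeriv x (y x) • L) x := by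
  have hterm : ∀ i ∈ (univ : Finset (Fin (n + 1))), HasFDerivAt (fun z => z i * y z ^ (i : ℕ))
      (x i • ((i : ℕ) • y x ^ ((i : ℕ) - 1)) • L + y x ^ (i : ℕ) • ContinuousLinearMap.proj i) x :=
    fun i _ => (ContinuousLinearMap.proj (R := 𝕜) i).hasFDerivAt.mul (hy.pow i)
  refine (HasFDerivAt.fun_sum hterm).congr_fderiv ?_
  ext v
  simp only [add_apply, _root_.sum_apply, smul_apply, ContinuousLinearMap.proj_apply, smul_eq_mul,
    nsmul_eq_mul, genericPolyCLM, genericPolyDeriv, sum_add_distrib, sum_mul]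
  rw [add_comm]
  congr 1
  exact sum_congr rfl fun i _ => by ring

theorem genericPolyDeriv_mul_fderiv {y : (Fin (n + 1) → 𝕜) → 𝕜} {x : Fin (n + 1) → 𝕜}
    (hy : DifferentiableAt 𝕜 y x) (hroot : ∀ᶠ z in 𝓝 x, genericPoly z (y z) = 0)
    (v : Fin (n + 1) → 𝕜) :
    genericPolyDeriv x (y x) * fderiv 𝕜 y x v = -genericPoly v (y x) := by
  have hzero : HasFDerivAt (fun z => genericPoly z (y z)) (0 : _ →L[𝕜] 𝕜) x :=
    (hasFDerivAt_const 0 x).congr_of_eventuallyEq hroot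
  have h := congr($(hy.hasFDerivAt.genericPoly_self.unique hzero) v)
  simp only [add_apply, smul_apply, smul_eq_mul, genericPolyCLM_apply, zero_apply] at h
  linear_combination h

end Calculus

theorem stmt7_general (n : ℕ) (U : Set (Fin (n + 1) → ℂ)) (hU : IsOpen U)
    (y : (Fin (n + 1) → ℂ) → ℂ) (hy : DifferentiableOn ℂ y U)
    (halg : ∀ x ∈ U, ∑ i : Fin (n + 1), x i * (y x) ^ (i : ℕ) = 0)
    (hdisc : ∀ x ∈ U, ∑ i : Fin (n + 1), (i : ℕ) * x i * (y x) ^ ((i : ℕ) - 1) ≠ 0) :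
    ∀ x ∈ U,
      (∑ i : Fin (n + 1), (i : ℕ) * x i * fderiv ℂ y x (Pi.single i 1) = - y x) ∧
      (∑ i : Fin (n + 1), x i * fderiv ℂ y x (Pi.single i 1) = 0) := by
  intro x hx
  have hroot : ∀ᶠ z in 𝓝 x, genericPoly z (y z) = 0 :=
    Filter.eventually_of_mem (hU.mem_nhds hx) halg
  have hD : genericPolyDeriv x (y x) ≠ 0 := hdisc x hx
  have key := genericPolyDeriv_mul_fderiv (hy.differentiableAt (hU.mem_nhds hx)) hroot
  constructor
  · rw [sum_mul_map_single _ (fun i : Fin (n + 1) => (i : ℕ) * x i)]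
    refine mul_left_cancel₀ hD ?_
    rw [key, ← mul_genericPolyDeriv]
    ring
  · rw [sum_mul_map_single, ← mul_right_inj' hD, key, mul_zero, neg_eq_zero]
    exact halg x hx

theorem stmt7 (n : ℕ) (hn : 2 ≤ n) (U : Set (Fin (n + 1) → ℂ)) (hU : IsOpen U)
    (y : (Fin (n + 1) → ℂ) → ℂ) (hy : DifferentiableOn ℂ y U)
    (halg : ∀ x ∈ U, ∑ i : Fin (n + 1), x i * (y x) ^ (i : ℕ) = 0)
    (hdisc : ∀ x ∈ U, ∑ i : Fin (n + 1), (i : ℕ) * x i * (y x) ^ ((i : ℕ) - 1) ≠ 0) :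
    ∀ x ∈ U,
      (∑ i : Fin (n + 1), (i : ℕ) * x i * fderiv ℂ y x (Pi.single i 1) = - y x) ∧
      (∑ i : Fin (n + 1), x i * fderiv ℂ y x (Pi.single i 1) = 0) :=
  stmt7_general n U hU y hy halg hdisc
end

section
/- Let y be holomorphic in (x₀, …, x_n) near a point with ∑_{i=0}^n x_i y^i = 0 and ∑_{i=1}^n i x_i y^{i−1} ≠ 0. Then for any indices i, j, k, l ∈ {0,…,n} with i + j = k + l, the mixed second partials satisfy ∂²y/∂x_i∂x_j = ∂²y/∂x_k∂x_l. -/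
/-!
Differentiating `P(x, y(x)) = 0`, where `P(x, t) = ∑ x_m t^{e_m}`, in `x_a` gives
`∂_a y = -y^{e_a} / P_t`. Differentiating once more in `x_b`, and using the first formula again
for `∂_b y`, yields `∂_b ∂_a y = ((e_a + e_b) y^{e_a + e_b - 1} P_t - P_tt y^{e_a + e_b}) / P_t^3`,
which depends on `a, b` only through `e_a + e_b`.
-/

open Filter Topology

section

variable {𝕜 : Type*} [NontriviallyNormedField 𝕜] {ι : Type*} [Fintype ι]

-- `∂P/∂t` and `∂²P/∂t²` for `P x t = ∑ m, x m * t ^ e m`.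
def coeffPolyDeriv (e : ι → ℕ) (x : ι → 𝕜) (t : 𝕜) : 𝕜 :=
  ∑ m, (e m : 𝕜) * x m * t ^ (e m - 1)

def coeffPolyDeriv2 (e : ι → ℕ) (x : ι → 𝕜) (t : 𝕜) : 𝕜 :=
  ∑ m, (e m : 𝕜) * ((e m - 1 : ℕ) : 𝕜) * x m * t ^ (e m - 1 - 1)

variable {y : (ι → 𝕜) → 𝕜} {x : ι → 𝕜}

theorem hasFDerivAt_sum_mul_mul_pow (c : ι → 𝕜) (e : ι → ℕ) {y' : (ι → 𝕜) →L[𝕜] 𝕜}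
    (hy : HasFDerivAt y y' x) :
    HasFDerivAt (fun z => ∑ m, c m * z m * y z ^ e m)
      ((∑ m, c m * e m * x m * y x ^ (e m - 1)) • y'
        + ∑ m, (c m * y x ^ e m) • ContinuousLinearMap.proj m) x := by
  have hterm : ∀ m, HasFDerivAt (fun z => c m * z m * y z ^ e m)
      ((c m * e m * x m * y x ^ (e m - 1)) • y' + (c m * y x ^ e m) • ContinuousLinearMap.proj m)
      x := fun m => by
    refine (((ContinuousLinearMap.proj m).hasFDerivAt.const_mul (c m)).mul
      ((hasDerivAt_pow (e m) (y x)).comp_hasFDerivAt x hy)).congr_fderiv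
      (ContinuousLinearMap.ext fun v => ?_)
    simp only [ContinuousLinearMap.proj_apply, Function.comp_apply, add_apply, smul_apply,
      smul_eq_mul]
    ring
  refine (HasFDerivAt.fun_sum fun m _ => hterm m).congr_fderiv ?_
  rw [Finset.sum_add_distrib, ← Finset.sum_smul]

theorem fderiv_sum_mul_mul_pow_apply_single [DecidableEq ι] (c : ι → 𝕜) (e : ι → ℕ)
    (hy : DifferentiableAt 𝕜 y x) (b : ι) :
    fderiv 𝕜 (fun z => ∑ m, c m * z m * y z ^ e m) x (Pi.single b 1)
      = (∑ m, c m * e m * x m * y x ^ (e m - 1)) * fderiv 𝕜 y x (Pi.single b 1)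
        + c b * y x ^ e b := by
  rw [(hasFDerivAt_sum_mul_mul_pow c e hy.hasFDerivAt).fderiv]
  simp [Pi.single_apply]

theorem natCast_mul_pow_sub_one_mul_pow (a b : ℕ) (t : 𝕜) :
    (a : 𝕜) * t ^ (a - 1) * t ^ b = (a : 𝕜) * t ^ (a + b - 1) := by
  cases a with
  | zero => simp
  | succ a => rw [mul_assoc, ← pow_add]; congr 3; omega

variable [DecidableEq ι] {e : ι → ℕ}

theorem fderiv_apply_single_of_sum_mul_pow_eq_zero
    (hP : ∀ᶠ z in 𝓝 x, ∑ m, z m * y z ^ e m = 0) (hy : DifferentiableAt 𝕜 y x)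
    (hD : coeffPolyDeriv e x (y x) ≠ 0) (b : ι) :
    fderiv 𝕜 y x (Pi.single b 1) = -y x ^ e b / coeffPolyDeriv e x (y x) := by
  have h := fderiv_sum_mul_mul_pow_apply_single (fun _ => 1) e hy b
  simp only [one_mul] at h
  rw [(Filter.EventuallyEq.fderiv_eq hP : fderiv 𝕜 _ x = fderiv 𝕜 (fun _ => (0 : 𝕜)) x),
    fderiv_const_apply, zero_apply] at h
  rw [eq_div_iff hD, coeffPolyDeriv]
  linear_combination -h

theorem fderiv_fderiv_apply_single_of_sum_mul_pow_eq_zero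
    (hP : ∀ᶠ z in 𝓝 x, ∑ m, z m * y z ^ e m = 0) (hy : ∀ᶠ z in 𝓝 x, DifferentiableAt 𝕜 y z)
    (hD : ∀ᶠ z in 𝓝 x, coeffPolyDeriv e z (y z) ≠ 0) (a b : ι) :
    fderiv 𝕜 (fun z => fderiv 𝕜 y z (Pi.single a 1)) x (Pi.single b 1)
      = (((e a + e b : ℕ) : 𝕜) * y x ^ (e a + e b - 1) * coeffPolyDeriv e x (y x)
          - coeffPolyDeriv2 e x (y x) * y x ^ (e a + e b)) / coeffPolyDeriv e x (y x) ^ 3 := by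
  have hyx := hy.self_of_nhds
  have hDx := hD.self_of_nhds
  have hfirst : (fun z => fderiv 𝕜 y z (Pi.single a 1))
      =ᶠ[𝓝 x] fun z => -y z ^ e a * (coeffPolyDeriv e z (y z))⁻¹ := by
    filter_upwards [hP.eventually_nhds, hy, hD] with z hPz hyz hDz
    rw [fderiv_apply_single_of_sum_mul_pow_eq_zero hPz hyz hDz, div_eq_mul_inv]
  have hpow : HasFDerivAt (fun z => -y z ^ e a)
      (-(((e a : 𝕜) * y x ^ (e a - 1)) • fderiv 𝕜 y x)) x :=
    ((hasDerivAt_pow (e a) (y x)).comp_hasFDerivAt x hyx.hasFDerivAt).neg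
  have hinv : HasFDerivAt (fun z => (coeffPolyDeriv e z (y z))⁻¹)
      (-(coeffPolyDeriv e x (y x) ^ 2)⁻¹ • fderiv 𝕜 (fun z => coeffPolyDeriv e z (y z)) x) x :=
    (hasDerivAt_inv hDx).comp_hasFDerivAt x
      (hasFDerivAt_sum_mul_mul_pow _ _ hyx.hasFDerivAt).differentiableAt.hasFDerivAt
  have hyb := fderiv_apply_single_of_sum_mul_pow_eq_zero hP hyx hDx b
  have hDb : fderiv 𝕜 (fun z => coeffPolyDeriv e z (y z)) x (Pi.single b 1)
      = coeffPolyDeriv2 e x (y x) * fderiv 𝕜 y x (Pi.single b 1) + e b * y x ^ (e b - 1) :=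
    fderiv_sum_mul_mul_pow_apply_single _ _ hyx b
  rw [hfirst.fderiv_eq, (hpow.fun_mul hinv).fderiv]
  simp only [add_apply, smul_apply, neg_apply, smul_eq_mul, hDb, hyb]
  field_simp
  have h1 := natCast_mul_pow_sub_one_mul_pow (e a) (e b) (y x)
  have h2 := natCast_mul_pow_sub_one_mul_pow (e b) (e a) (y x)
  rw [add_comm (e b)] at h2
  push_cast
  linear_combination coeffPolyDeriv e x (y x) * (h1 + h2)
    - coeffPolyDeriv2 e x (y x) * (pow_add (y x) (e a) (e b)).symm

theorem fderiv_fderiv_apply_single_eq_of_add_eq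
    (hP : ∀ᶠ z in 𝓝 x, ∑ m, z m * y z ^ e m = 0) (hy : ∀ᶠ z in 𝓝 x, DifferentiableAt 𝕜 y z)
    (hD : ∀ᶠ z in 𝓝 x, coeffPolyDeriv e z (y z) ≠ 0) {a b c d : ι} (h : e a + e b = e c + e d) :
    fderiv 𝕜 (fun z => fderiv 𝕜 y z (Pi.single a 1)) x (Pi.single b 1)
      = fderiv 𝕜 (fun z => fderiv 𝕜 y z (Pi.single c 1)) x (Pi.single d 1) := by
  rw [fderiv_fderiv_apply_single_of_sum_mul_pow_eq_zero hP hy hD,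
    fderiv_fderiv_apply_single_of_sum_mul_pow_eq_zero hP hy hD, h]

end

theorem stmt8 (n : ℕ) (U : Set (Fin (n + 1) → ℂ)) (hU : IsOpen U)
    (y : (Fin (n + 1) → ℂ) → ℂ) (hy : AnalyticOn ℂ y U)
    (halg : ∀ x ∈ U, ∑ i : Fin (n + 1), x i * (y x) ^ (i : ℕ) = 0)
    (hdisc : ∀ x ∈ U, ∑ i : Fin (n + 1), (i : ℕ) * x i * (y x) ^ ((i : ℕ) - 1) ≠ 0)
    (i j k l : Fin (n + 1)) (hsum : (i : ℕ) + (j : ℕ) = (k : ℕ) + (l : ℕ)) :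
    ∀ x ∈ U,
      fderiv ℂ (fun z => fderiv ℂ y z (Pi.single i 1)) x (Pi.single j 1) =
      fderiv ℂ (fun z => fderiv ℂ y z (Pi.single k 1)) x (Pi.single l 1) := by
  intro x hx
  have hUx : U ∈ 𝓝 x := hU.mem_nhds hx
  exact fderiv_fderiv_apply_single_eq_of_add_eq (e := fun m : Fin (n + 1) => (m : ℕ))
    (eventually_of_mem hUx halg)
    (eventually_of_mem hUx fun z hz => hy.differentiableOn.differentiableAt (hU.mem_nhds hz))
    (eventually_of_mem hUx hdisc) hsum
end

section
/- Let y be holomorphic near x₀ ∈ ℂ satisfying y(x)⁵ + 2y(x)⁴ − 3y(x)³ + y(x)² + 5y(x) + x = 0 near x₀, with 5y(x₀)⁴ + 8y(x₀)³ − 9y(x₀)² + 2y(x₀) + 5 ≠ 0. Then y has vanishing image under the fifth-order differential operator with polynomial coefficients: (−43728190560 + 795819153x − 53446888x² + 56028x³)(−1585575 + 71982x + 281583x² + 81342x³ + 3125x⁴) y⁽⁵⁾ + 15(−650327879439783 − 5747872136026563x − 2400588229818366x² − 91559102743545x³ − 304019551433x⁴ − 131338505212x⁵ + 128397500x⁶)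 y⁽⁴⁾ + 60(−1821690090417321 − 1560609625036728x − 98711280942848x² + 721492325057x³ − 103787727624x⁴ + 91045500x⁵) y⁽³⁾ + 180(−282046871305467 − 38794189010031x + 478890241959x² − 28458003540x³ + 21944300x⁴) y⁽²⁾ + 720(−1756652589603 + 23053844253x − 812236372x² + 522928x³) y′ = 0 near x₀. -/
/-!
On the curve `y⁵ + 2y⁴ - 3y³ + y² + 5y + x = 0` the coordinate `x` is the polynomial
`φ(y) = -quintic(y)`, so `y` is a local inverse of `φ`. Differentiating `φ(y(x)) = x` gives
`y' = 1 / φ'(y)`, and inductively `y⁽ᵏ⁺¹⁾ = Nₖ(y) / φ'(y)^(2k+1)` for explicit polynomials `Nₖ`.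
Substituting these and `x = φ(y)` into the operator turns the claim into a polynomial identity
in the single variable `y`.
-/

open Polynomial Filter Topology Set

namespace Polynomial

/-- If `y` is a local inverse of `φ`, then `y⁽ᵏ⁺¹⁾ = (inverseDerivNum φ k)(y) / φ'(y) ^ (2k+1)`. -/
noncomputable def inverseDerivNum {R : Type*} [CommRing R] (φ : R[X]) : ℕ → R[X]
  | 0 => 1
  | k + 1 => derivative (inverseDerivNum φ k) * derivative φ
      - (2 * k + 1) * inverseDerivNum φ k * derivative (derivative φ)

variable {𝕜 : Type*} [NontriviallyNormedField 𝕜]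

theorem eval_derivative_mul_deriv_eq_one {φ : 𝕜[X]} {y : 𝕜 → 𝕜} {x : 𝕜}
    (hy : DifferentiableAt 𝕜 y x) (hφ : ∀ᶠ z in 𝓝 x, φ.eval (y z) = z) :
    (derivative φ).eval (y x) * deriv y x = 1 :=
  ((φ.hasDerivAt (y x)).comp x hy.hasDerivAt).unique
    ((hasDerivAt_id x).congr_of_eventuallyEq hφ)

theorem iteratedDeriv_succ_eqOn_of_eval_eq {φ : 𝕜[X]} {y : 𝕜 → 𝕜} {U : Set 𝕜}
    (hU : IsOpen U) (hy : DifferentiableOn 𝕜 y U) (hφ : ∀ x ∈ U, φ.eval (y x) = x) (k : ℕ) :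
    EqOn (iteratedDeriv (k + 1) y)
      (fun x => (inverseDerivNum φ k).eval (y x) / (derivative φ).eval (y x) ^ (2 * k + 1)) U := by
  have hdy : ∀ x ∈ U, DifferentiableAt 𝕜 y x := fun x hx => hy.differentiableAt (hU.mem_nhds hx)
  have hinv : ∀ x ∈ U, (derivative φ).eval (y x) * deriv y x = 1 := fun x hx =>
    eval_derivative_mul_deriv_eq_one (hdy x hx) (eventually_of_mem (hU.mem_nhds hx) hφ)
  have hderiv : ∀ x ∈ U, deriv y x = ((derivative φ).eval (y x))⁻¹ := fun x hx =>
    eq_inv_of_mul_eq_one_right (hinv x hx)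
  induction k with
  | zero =>
    intro x hx
    simp [inverseDerivNum, hderiv x hx]
  | succ k ih =>
    intro x hx
    have hD : (derivative φ).eval (y x) ≠ 0 := left_ne_zero_of_mul_eq_one (hinv x hx)
    have hquot := ((((inverseDerivNum φ k).hasDerivAt (y x)).div
      (((derivative φ).hasDerivAt (y x)).pow (2 * k + 1)) (pow_ne_zero _ hD)).comp x
      (hdy x hx).hasDerivAt).congr_of_eventuallyEq (ih.eventuallyEq_of_mem (hU.mem_nhds hx))
    rw [iteratedDeriv_succ, hquot.deriv, hderiv x hx]
    simp only [inverseDerivNum, Pi.pow_apply, eval_sub, eval_mul, eval_add, eval_ofNat, eval_natCast,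
      eval_one, Nat.add_sub_cancel, Nat.cast_add, Nat.cast_mul, Nat.cast_ofNat, Nat.cast_one]
    field_simp
    ring

end Polynomial

noncomputable def quintic : ℂ[X] := X ^ 5 + 2 * X ^ 4 - 3 * X ^ 3 + X ^ 2 + 5 * X

theorem derivative_neg_quintic :
    derivative (-quintic) = -(5 * X ^ 4 + 8 * X ^ 3 - 9 * X ^ 2 + 2 * X + 5) := by
  simp only [quintic, derivative_neg, derivative_add, derivative_sub, derivative_mul,
    derivative_X_pow, derivative_X, derivative_ofNat, map_natCast]
  push_cast
  ring

theorem inverseDerivNum_neg_quintic_one :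
    inverseDerivNum (-quintic) 1 = 2 - 18 * X + 24 * X ^ 2 + 20 * X ^ 3 := by
  rw [inverseDerivNum, inverseDerivNum, derivative_neg_quintic]
  simp only [derivative_neg, derivative_add, derivative_sub, derivative_mul, derivative_X_pow,
    derivative_X, derivative_ofNat, derivative_one, map_natCast]
  push_cast
  ring

theorem inverseDerivNum_neg_quintic_two :
    inverseDerivNum (-quintic) 2 =
      102 - 420 * X + 702 * X ^ 2 - 1896 * X ^ 3 - 186 * X ^ 4 + 2160 * X ^ 5 + 900 * X ^ 6 := by
  rw [inverseDerivNum, inverseDerivNum_neg_quintic_one, derivative_neg_quintic]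
  simp only [derivative_neg, derivative_add, derivative_sub, derivative_mul, derivative_X_pow,
    derivative_X, derivative_ofNat, map_natCast]
  push_cast
  ring

theorem inverseDerivNum_neg_quintic_three :
    inverseDerivNum (-quintic) 3 =
      3120 - 19560 * X + 78912 * X ^ 2 - 91248 * X ^ 3 + 98184 * X ^ 4 - 135792 * X ^ 5
        - 276528 * X ^ 6 + 125520 * X ^ 7 + 226800 * X ^ 8 + 63000 * X ^ 9 := by
  rw [inverseDerivNum, inverseDerivNum_neg_quintic_two, derivative_neg_quintic]
  simp only [derivative_neg, derivative_add, derivative_sub, derivative_mul, derivative_X_pow,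
    derivative_X, derivative_ofNat, map_natCast]
  push_cast
  ring

theorem inverseDerivNum_neg_quintic_four :
    inverseDerivNum (-quintic) 4 =
      141480 - 1416960 * X + 4970520 * X ^ 2 - 13908960 * X ^ 3 + 22371480 * X ^ 4
        - 3965040 * X ^ 5 + 7999920 * X ^ 6 + 5238720 * X ^ 7 - 59995800 * X ^ 8
        - 28859040 * X ^ 9 + 33931800 * X ^ 10 + 28728000 * X ^ 11 + 5985000 * X ^ 12 := by
  rw [inverseDerivNum, inverseDerivNum_neg_quintic_three, derivative_neg_quintic]
  simp only [derivative_neg, derivative_add, derivative_sub, derivative_mul, derivative_X_pow,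
    derivative_X, derivative_ofNat, map_natCast]
  push_cast
  ring

theorem stmt13_general (x₀ : ℂ) (y : ℂ → ℂ) (hy : AnalyticAt ℂ y x₀)
    (halg : ∀ᶠ x in nhds x₀,
      (y x) ^ 5 + 2 * (y x) ^ 4 - 3 * (y x) ^ 3 + (y x) ^ 2 + 5 * y x + x = 0) :
    ∀ᶠ x in nhds x₀,
      (-43728190560 + 795819153 * x - 53446888 * x ^ 2 + 56028 * x ^ 3) *
        (-1585575 + 71982 * x + 281583 * x ^ 2 + 81342 * x ^ 3 + 3125 * x ^ 4) *
        iteratedDeriv 5 y x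
      + 15 * (-650327879439783 - 5747872136026563 * x - 2400588229818366 * x ^ 2
          - 91559102743545 * x ^ 3 - 304019551433 * x ^ 4 - 131338505212 * x ^ 5
          + 128397500 * x ^ 6) * iteratedDeriv 4 y x
      + 60 * (-1821690090417321 - 1560609625036728 * x - 98711280942848 * x ^ 2
          + 721492325057 * x ^ 3 - 103787727624 * x ^ 4 + 91045500 * x ^ 5) *
          iteratedDeriv 3 y x
      + 180 * (-282046871305467 - 38794189010031 * x + 478890241959 * x ^ 2
          - 28458003540 * x ^ 3 + 21944300 * x ^ 4) * iteratedDeriv 2 y x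
      + 720 * (-1756652589603 + 23053844253 * x - 812236372 * x ^ 2
          + 522928 * x ^ 3) * deriv y x = 0 := by
  obtain ⟨U, hU, hUo, hx₀⟩ := eventually_nhds_iff.mp (hy.eventually_analyticAt.and halg)
  have hinv : ∀ x ∈ U, (-quintic).eval (y x) = x := fun x hx => by
    simp only [quintic, eval_neg, eval_add, eval_sub, eval_mul, eval_pow, eval_X, eval_ofNat]
    linear_combination -(hU x hx).2
  have hdiff : ∀ x ∈ U, DifferentiableAt ℂ y x := fun x hx => (hU x hx).1.differentiableAt
  have hder := iteratedDeriv_succ_eqOn_of_eval_eq hUo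
    (fun x hx => (hdiff x hx).differentiableWithinAt) hinv
  filter_upwards [hUo.mem_nhds hx₀] with x hx
  have hD : (derivative (-quintic)).eval (y x) ≠ 0 := left_ne_zero_of_mul_eq_one
    (eval_derivative_mul_deriv_eq_one (hdiff x hx) (eventually_of_mem (hUo.mem_nhds hx) hinv))
  rw [← iteratedDeriv_one, hder 0 hx, hder 1 hx, hder 2 hx, hder 3 hx,
    (hder 4 hx : iteratedDeriv 5 y x = _)]
  beta_reduce
  have hxw := hinv x hx
  generalize y x = w at hD hxw ⊢
  subst hxw
  rw [derivative_neg_quintic] at hD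
  rw [inverseDerivNum.eq_1, inverseDerivNum_neg_quintic_one, inverseDerivNum_neg_quintic_two,
    inverseDerivNum_neg_quintic_three, inverseDerivNum_neg_quintic_four, derivative_neg_quintic]
  simp only [Nat.reduceMul, Nat.reduceAdd]
  field_simp
  simp only [quintic, eval_neg, eval_add, eval_sub, eval_mul, eval_pow, eval_X, eval_ofNat, eval_one]
  ring

theorem stmt13 (x₀ : ℂ) (y : ℂ → ℂ) (hy : AnalyticAt ℂ y x₀)
    (halg : ∀ᶠ x in nhds x₀,
      (y x) ^ 5 + 2 * (y x) ^ 4 - 3 * (y x) ^ 3 + (y x) ^ 2 + 5 * y x + x = 0)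
    (hdisc : 5 * (y x₀) ^ 4 + 8 * (y x₀) ^ 3 - 9 * (y x₀) ^ 2 + 2 * y x₀ + 5 ≠ 0) :
    ∀ᶠ x in nhds x₀,
      (-43728190560 + 795819153 * x - 53446888 * x ^ 2 + 56028 * x ^ 3) *
        (-1585575 + 71982 * x + 281583 * x ^ 2 + 81342 * x ^ 3 + 3125 * x ^ 4) *
        iteratedDeriv 5 y x
      + 15 * (-650327879439783 - 5747872136026563 * x - 2400588229818366 * x ^ 2
          - 91559102743545 * x ^ 3 - 304019551433 * x ^ 4 - 131338505212 * x ^ 5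
          + 128397500 * x ^ 6) * iteratedDeriv 4 y x
      + 60 * (-1821690090417321 - 1560609625036728 * x - 98711280942848 * x ^ 2
          + 721492325057 * x ^ 3 - 103787727624 * x ^ 4 + 91045500 * x ^ 5) *
          iteratedDeriv 3 y x
      + 180 * (-282046871305467 - 38794189010031 * x + 478890241959 * x ^ 2
          - 28458003540 * x ^ 3 + 21944300 * x ^ 4) * iteratedDeriv 2 y x
      + 720 * (-1756652589603 + 23053844253 * x - 812236372 * x ^ 2
          + 522928 * x ^ 3) * deriv y x = 0 :=
  stmt13_general x₀ y hy halg
end
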